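/- arXiv:2206.01143 — 8 statements merged into one kernel-verified Lean document; each statement's English description precedes it below -/
import Mathlib

section
/- Let k be a field, let m, p ≥ 1 and n = m + p, let f : Fin m → Polynomial k with each f i of degree < n, and let s ∈ k. Define M : Matrix (Fin m) (Fin n) k by M i r = coeff_r (f i), and define Γ(s) : Matrix (Fin n) (Fin m) k by Γ(s) r j = coeff_r (γ_j(s)). Then det (M * Γ(s)) = Polynomial.eval s (Wr f). -/
open Polynomial

/-- The Wronskian of a family `f : Fin m → Polynomial k`: the determinant of the
`m × m` matrix whose `(i,j)` entry is the `i`-th iterated derivative of `f j`. -/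
noncomputable def Wr {k : Type*} [Field k] {m : ℕ} (f : Fin m → Polynomial k) : Polynomial k :=
  Matrix.det (Matrix.of fun i j : Fin m => Polynomial.derivative^[(i : ℕ)] (f j))

/-- The `j`-th derivative of the rational normal curve `γ(s) = ∑_{r<n} s^r X^r`. -/
noncomputable def gammaDeriv {k : Type*} [Field k] (n : ℕ) (s : k) (j : ℕ) : Polynomial k :=
  ∑ r ∈ Finset.range n, Polynomial.C ((Nat.descFactorial r j : k) * s ^ (r - j)) * Polynomial.X ^ r

lemma gammaDeriv_coeff {k : Type*} [Field k] (n : ℕ) (s : k) (j r : ℕ) (hr : r < n) :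
    (gammaDeriv n s j).coeff r = (Nat.descFactorial r j : k) * s ^ (r - j) := by
  unfold gammaDeriv
  rw [Polynomial.finset_sum_coeff, Finset.sum_eq_single r]
  · rw [coeff_C_mul, coeff_X_pow]; simp
  · intro b _ hb; rw [coeff_C_mul, coeff_X_pow]; simp [Ne.symm hb]
  · intro h; exact absurd (Finset.mem_range.mpr hr) h

lemma eval_iter_deriv {k : Type*} [Field k] (n : ℕ) (f : Polynomial k)
    (hf : f.natDegree < n) (j : ℕ) (s : k) :
    ∑ r ∈ Finset.range n, f.coeff r * ((Nat.descFactorial r j : k) * s ^ (r - j)) =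
      Polynomial.eval s (Polynomial.derivative^[j] f) := by
  have hd : (derivative^[j] f).natDegree < n :=
    lt_of_le_of_lt ((natDegree_iterate_derivative f j).trans (Nat.sub_le _ _)) hf
  rw [Polynomial.eval_eq_sum_range' hd]
  simp only [coeff_iterate_derivative, nsmul_eq_mul]
  by_cases hj : n ≤ j
  · rw [Finset.sum_eq_zero, Finset.sum_eq_zero]
    · intro t ht
      have : f.coeff (t + j) = 0 :=
        coeff_eq_zero_of_natDegree_lt (lt_of_lt_of_le hf (le_trans hj (Nat.le_add_left _ _)))
      simp [this]
    · intro r hr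
      rw [Nat.descFactorial_eq_zero_iff_lt.mpr (lt_of_lt_of_le (Finset.mem_range.mp hr) hj)]
      simp
  · push_neg at hj
    have hL : ∑ r ∈ Finset.range n, f.coeff r * ((Nat.descFactorial r j : k) * s ^ (r - j)) =
        ∑ t ∈ Finset.range (n - j),
          f.coeff (j + t) * ((Nat.descFactorial (j + t) j : k) * s ^ t) := by
      have hsplit : ∑ r ∈ Finset.range n, f.coeff r * ((Nat.descFactorial r j : k) * s ^ (r - j)) =
          ∑ r ∈ Finset.Ico j n, f.coeff r * ((Nat.descFactorial r j : k) * s ^ (r - j)) := by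
        rw [Finset.range_eq_Ico, ← Finset.sum_Ico_consecutive _ (Nat.zero_le j) hj.le]
        have h0 : ∑ r ∈ Finset.Ico 0 j,
            f.coeff r * ((Nat.descFactorial r j : k) * s ^ (r - j)) = 0 := by
          apply Finset.sum_eq_zero
          intro r hr
          rw [Nat.descFactorial_eq_zero_iff_lt.mpr (Finset.mem_Ico.mp hr).2]
          simp
        rw [h0, zero_add]
      rw [hsplit, Finset.sum_Ico_eq_sum_range]
      apply Finset.sum_congr rfl
      intro t _
      rw [Nat.add_sub_cancel_left]
    rw [hL]
    rw [← Finset.sum_subset (Finset.range_subset_range.mpr (Nat.sub_le n j))]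
    · apply Finset.sum_congr rfl
      intro t _
      rw [add_comm j t]
      ring
    · intro t _ ht
      have : f.coeff (t + j) = 0 := by
        apply coeff_eq_zero_of_natDegree_lt
        rw [Finset.mem_range, not_lt] at ht
        omega
      simp [this]

theorem det_mul_gamma_eq_eval_wronskian {k : Type*} [Field k] (m p n : ℕ)
    (hm : 1 ≤ m) (hp : 1 ≤ p) (hn : n = m + p)
    (f : Fin m → Polynomial k) (hf : ∀ i, (f i).degree < n) (s : k) :
    Matrix.det
      ((Matrix.of fun (i : Fin m) (r : Fin n) => (f i).coeff r) *
        (Matrix.of fun (r : Fin n) (j : Fin m) => (gammaDeriv n s (j : ℕ)).coeff r)) =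
      Polynomial.eval s (Wr f) := by
  have hnat : ∀ i, (f i).natDegree < n := by
    intro i
    by_cases h : f i = 0
    · simp [h]; omega
    · exact (Polynomial.natDegree_lt_iff_degree_lt h).mpr (by exact_mod_cast hf i)
  have hM : ((Matrix.of fun (i : Fin m) (r : Fin n) => (f i).coeff r) *
        (Matrix.of fun (r : Fin n) (j : Fin m) => (gammaDeriv n s (j : ℕ)).coeff r)) =
      ((Matrix.of fun i j : Fin m =>
        Polynomial.derivative^[(i : ℕ)] (f j)).map (eval s)).transpose := by
    ext i j
    simp only [Matrix.mul_apply, Matrix.of_apply, Matrix.transpose_apply, Matrix.map_apply]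
    rw [Fin.sum_univ_eq_sum_range
      (fun r => (f i).coeff r * (gammaDeriv n s (j : ℕ)).coeff r)]
    rw [← eval_iter_deriv n (f i) (hnat i) j s]
    apply Finset.sum_congr rfl
    intro r hr
    rw [gammaDeriv_coeff n s j r (Finset.mem_range.mp hr)]
  rw [hM, Matrix.det_transpose, Wr, ← Polynomial.coe_evalRingHom, RingHom.map_det,
    RingHom.mapMatrix_apply]
end

section
/- Let k be a field, let m, p ≥ 1 and n = m + p, and assume (n−1)! ≠ 0 in k. Let f : Fin m → Polynomial k with each f i of degree < n, and let H be the k-subspace of polynomials g of degree < n satisfying ⟨g, f i⟩ = 0 for all i ∈ Fin m. Then for every s ∈ k, the Wronskian Wr(f) evaluated at s is zero if and only if there exists a nonzero polynomial lying in both H and F_m(s), i.e. H ⊓ F_m(s) ≠ ⊥. -/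
open Polynomial

/-- The pairing `⟨g, f⟩ = ∑_r (coeff r g) * (coeff r f)`. -/
noncomputable def pairing {k : Type*} [Field k] (g f : Polynomial k) : k :=
  ∑ r ∈ g.support, g.coeff r * f.coeff r

/-! Evaluating the Wronskian at `s` turns its rows into pairings with the osculating vectors:
`eval s (D^i g) = ⟨γ_i(s), g⟩` for `deg g < n`, so `Wr(f)(s)` is the determinant of
`M i j = ⟨γ_i(s), f j⟩`. A vector `c` is in the left kernel of `M` exactly when `∑ c_i γ_i(s)` lies
in `H`, and the `γ_i(s)` are linearly independent since pairing them with the `(X - s)^j` gives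
the invertible diagonal matrix `diag(j!)`. Hence `det M = 0` iff `H` meets `F_m(s)` nontrivially. -/

lemma Polynomial.support_subset_range_of_degree_lt {R : Type*} [Semiring R] {g : R[X]} {n : ℕ}
    (hg : g.degree < n) : g.support ⊆ Finset.range n := fun r hr =>
  Finset.mem_range.mpr <| by
    exact_mod_cast (le_degree_of_ne_zero (mem_support_iff.mp hr)).trans_lt hg

lemma Polynomial.eval_iterate_derivative_X_sub_C_pow {R : Type*} [CommRing R] (s : R) (i j : ℕ) :
    eval s (derivative^[i] ((X - C s) ^ j)) = if i = j then (j.factorial : R) else 0 := by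
  rw [iterate_derivative_X_sub_pow]
  split_ifs with h
  · simp [h, Nat.descFactorial_self]
  · rcases Nat.lt_or_gt_of_ne h with h | h
    · simp [Nat.sub_ne_zero_of_lt h]
    · simp [Nat.descFactorial_eq_zero_iff_lt.mpr h]

theorem LinearIndependent.inf_span_range_ne_bot_iff {R M ι : Type*} [Ring R] [AddCommGroup M]
    [Module R M] [Fintype ι] {v : ι → M} (hv : LinearIndependent R v) (H : Submodule R M) :
    H ⊓ Submodule.span R (Set.range v) ≠ ⊥ ↔ ∃ c : ι → R, c ≠ 0 ∧ ∑ i, c i • v i ∈ H := by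
  rw [Submodule.ne_bot_iff]
  constructor
  · rintro ⟨g, hg, hg0⟩
    obtain ⟨hgH, hgv⟩ := Submodule.mem_inf.mp hg
    obtain ⟨c, rfl⟩ := (Submodule.mem_span_range_iff_exists_fun R).mp hgv
    exact ⟨c, fun hc => hg0 (by simp [hc]), hgH⟩
  · rintro ⟨c, hc0, hcH⟩
    refine ⟨_, Submodule.mem_inf.mpr
      ⟨hcH, (Submodule.mem_span_range_iff_exists_fun R).mpr ⟨c, rfl⟩⟩, fun h => hc0 (_root_.funext (Fintype.linearIndependent_iff.mp hv c h))⟩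

section Osculating

variable {k : Type*} [Field k]

lemma coeff_gammaDeriv (n : ℕ) (s : k) (j r : ℕ) :
    (gammaDeriv n s j).coeff r =
      if r < n then (Nat.descFactorial r j : k) * s ^ (r - j) else 0 := by
  simp only [gammaDeriv, finsetSum_coeff, coeff_C_mul, coeff_X_pow, mul_ite, mul_one, mul_zero,
    Finset.sum_ite_eq, Finset.mem_range]

lemma gammaDeriv_mem_degreeLT (n : ℕ) (s : k) (j : ℕ) : gammaDeriv n s j ∈ degreeLT k n :=
  Submodule.sum_mem _ fun r hr => mem_degreeLT.mpr <|
    (degree_C_mul_X_pow_le r _).trans_lt (by exact_mod_cast Finset.mem_range.mp hr)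

lemma pairing_eq_sum_of_support_subset {g : k[X]} {S : Finset ℕ} (h : g.support ⊆ S) (q : k[X]) :
    pairing g q = ∑ r ∈ S, g.coeff r * q.coeff r :=
  Finset.sum_subset h fun r _ hr => by rw [notMem_support_iff.mp hr, zero_mul]

lemma pairing_eq_lsum (g q : k[X]) :
    pairing g q = lsum (fun r => LinearMap.mulRight k (q.coeff r)) g := rfl

lemma pairing_sum_smul {ι : Type*} (t : Finset ι) (c : ι → k) (g : ι → k[X]) (q : k[X]) :
    pairing (∑ i ∈ t, c i • g i) q = ∑ i ∈ t, c i * pairing (g i) q := by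
  simp only [pairing_eq_lsum, map_sum, map_smul, smul_eq_mul]

lemma pairing_gammaDeriv {n : ℕ} (s : k) (i : ℕ) {g : k[X]} (hg : g.degree < n) :
    pairing (gammaDeriv n s i) g = eval s (derivative^[i] g) := by
  have hsupp := support_subset_range_of_degree_lt hg
  calc pairing (gammaDeriv n s i) g
      = ∑ r ∈ Finset.range n, (gammaDeriv n s i).coeff r * g.coeff r :=
        pairing_eq_sum_of_support_subset
          (support_subset_range_of_degree_lt (mem_degreeLT.mp (gammaDeriv_mem_degreeLT n s i))) g
    _ = ∑ r ∈ g.support, (gammaDeriv n s i).coeff r * g.coeff r :=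
        (Finset.sum_subset hsupp fun r _ hr => by rw [notMem_support_iff.mp hr, mul_zero]).symm
    _ = ∑ r ∈ g.support, g.coeff r * ((Nat.descFactorial r i : k) * s ^ (r - i)) :=
        Finset.sum_congr rfl fun r hr => by
          rw [coeff_gammaDeriv, if_pos (Finset.mem_range.mp (hsupp hr)), mul_comm]
    _ = eval s (derivative^[i] g) := by
        conv_rhs => rw [as_sum_support_C_mul_X_pow g]
        simp [iterate_derivative_sum, iterate_derivative_C_mul, iterate_derivative_X_pow_eq_C_mul,
          eval_finsetSum]

lemma linearIndependent_gammaDeriv {m n : ℕ} (hmn : m ≤ n) (s : k)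
    (hfac : ((n - 1).factorial : k) ≠ 0) :
    LinearIndependent k fun j : Fin m => gammaDeriv n s j := by
  refine Fintype.linearIndependent_iff.mpr fun c hc j => ?_
  have hj : ((j : ℕ).factorial : k) ≠ 0 := fun h => hfac <| zero_dvd_iff.mp <|
    h ▸ Nat.cast_dvd_cast (Nat.factorial_dvd_factorial (by omega))
  have hdeg : ((X - C s) ^ (j : ℕ)).degree < (n : WithBot ℕ) := by
    rw [degree_pow, degree_X_sub_C, nsmul_one]; exact_mod_cast j.2.trans_le hmn
  have hpair := congrArg (pairing · ((X - C s) ^ (j : ℕ))) hc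
  simp only [pairing_sum_smul, pairing_gammaDeriv s _ hdeg, eval_iterate_derivative_X_sub_C_pow,
    Fin.val_inj, mul_ite, mul_zero, Finset.sum_ite_eq', Finset.mem_univ, if_true] at hpair
  exact (mul_eq_zero.mp hpair).resolve_right hj

lemma eval_Wr {m : ℕ} (f : Fin m → k[X]) (s : k) :
    eval s (Wr f) = (Matrix.of fun i j : Fin m => eval s (derivative^[i] (f j))).det := by
  rw [Wr, ← coe_evalRingHom, RingHom.map_det]
  rfl

end Osculating

theorem wronskian_eval_zero_iff_meets_osculating_general {k : Type*} [Field k] (m p n : ℕ)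
    (hn : n = m + p)
    (hfac : ((Nat.factorial (n - 1) : k) ≠ 0))
    (f : Fin m → Polynomial k) (hf : ∀ i, (f i).degree < n)
    (H : Submodule k (Polynomial k))
    (hH : ∀ g : Polynomial k, g ∈ H ↔ (g.degree < n ∧ ∀ i : Fin m, pairing g (f i) = 0))
    (s : k) :
    Polynomial.eval s (Wr f) = 0 ↔
      H ⊓ Submodule.span k (Set.range fun j : Fin m => gammaDeriv n s (j : ℕ)) ≠ ⊥ := by
  set M := Matrix.of fun i j : Fin m => pairing (gammaDeriv n s i) (f j)
  have hWr : eval s (Wr f) = M.det := by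
    rw [eval_Wr]
    congr
    ext i j
    exact (pairing_gammaDeriv s i (hf j)).symm
  have hmem (c : Fin m → k) : ∑ i, c i • gammaDeriv n s i ∈ H ↔ Matrix.vecMul c M = 0 := by
    have hdeg : (∑ i, c i • gammaDeriv n s i).degree < n := mem_degreeLT.mp <|
      Submodule.sum_smul_mem _ c fun i _ => gammaDeriv_mem_degreeLT n s i
    simp only [hH, hdeg, true_and, pairing_sum_smul, funext_iff, Matrix.vecMul, dotProduct, M,
      Matrix.of_apply, Pi.zero_apply]
  rw [hWr, ← Matrix.exists_vecMul_eq_zero_iff,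
    LinearIndependent.inf_span_range_ne_bot_iff
      (linearIndependent_gammaDeriv (hn ▸ Nat.le_add_right m p) s hfac)]
  simp only [hmem]

theorem wronskian_eval_zero_iff_meets_osculating {k : Type*} [Field k] (m p n : ℕ)
    (hm : 1 ≤ m) (hp : 1 ≤ p) (hn : n = m + p)
    (hfac : ((Nat.factorial (n - 1) : k) ≠ 0))
    (f : Fin m → Polynomial k) (hf : ∀ i, (f i).degree < n)
    (H : Submodule k (Polynomial k))
    (hH : ∀ g : Polynomial k, g ∈ H ↔ (g.degree < n ∧ ∀ i : Fin m, pairing g (f i) = 0))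
    (s : k) :
    Polynomial.eval s (Wr f) = 0 ↔
      H ⊓ Submodule.span k (Set.range fun j : Fin m => gammaDeriv n s (j : ℕ)) ≠ ⊥ :=
  wronskian_eval_zero_iff_meets_osculating_general m p n hn hfac f hf H hH s
end

section
/- Let k be a field and let n ≥ 1 with (n−1)! ≠ 0 in k. If f : Fin m → Polynomial k is a family of polynomials, each of degree < n, that is linearly independent over k, then the Wronskian Wr(f) is not the zero polynomial. -/
open Polynomial

/-!
If `g = f * A` for a scalar matrix `A`, then `Wr g = Wr f * C (det A)`, and Gaussian elimination on
leading coefficients produces such a `g` in the span of `f` whose members are nonzero and have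
pairwise distinct degrees `d j < n`; as `(n - 1)! ≠ 0`, the `d j` stay distinct in `k`.
The operator `X ^ i * derivative^[i]` multiplies `X ^ e` by `e.descFactorial i`, so the coefficient
of `X ^ (∑ j, d j)` in `det (X ^ i * derivative^[i] (g j)) = (∏ i, X ^ i) * Wr g` is the product of
the leading coefficients of the `g j` times a Vandermonde determinant in the `d j`, hence nonzero.
-/

namespace Polynomial

theorem coeff_prod_sum_of_natDegree_le {R ι : Type*} [CommSemiring R] (s : Finset ι)
    (f : ι → R[X]) (d : ι → ℕ) (h : ∀ i ∈ s, (f i).natDegree ≤ d i) :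
    (∏ i ∈ s, f i).coeff (∑ i ∈ s, d i) = ∏ i ∈ s, (f i).coeff (d i) := by
  induction s using Finset.cons_induction with
  | empty => simp
  | cons a s ha ih =>
    have hs : ∀ i ∈ s, (f i).natDegree ≤ d i := fun i hi => h i (Finset.mem_cons_of_mem hi)
    rw [Finset.prod_cons, Finset.sum_cons, Finset.prod_cons, ← ih hs]
    exact coeff_mul_add_eq_of_natDegree_le (h a (Finset.mem_cons_self a s))
      ((natDegree_prod_le s f).trans (Finset.sum_le_sum hs))

variable {R : Type*} [CommSemiring R]

theorem coeff_X_pow_mul_iterate_derivative (p : R[X]) (i e : ℕ) :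
    (X ^ i * derivative^[i] p).coeff e = e.descFactorial i • p.coeff e := by
  rw [coeff_X_pow_mul']
  split_ifs with h
  · rw [coeff_iterate_derivative, Nat.sub_add_cancel h]
  · rw [Nat.descFactorial_eq_zero_iff_lt.mpr (not_le.mp h), zero_smul]

theorem natDegree_X_pow_mul_iterate_derivative_le (p : R[X]) (i : ℕ) :
    (X ^ i * derivative^[i] p).natDegree ≤ p.natDegree := by
  rw [natDegree_le_iff_coeff_eq_zero]
  intro e he
  rw [coeff_X_pow_mul_iterate_derivative, coeff_eq_zero_of_natDegree_lt he, smul_zero]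

end Polynomial

namespace Matrix

theorem coeff_det_sum_of_natDegree_le {R n : Type*} [CommRing R] [Fintype n] [DecidableEq n]
    (M : Matrix n n R[X]) (d : n → ℕ) (h : ∀ i j, (M i j).natDegree ≤ d j) :
    M.det.coeff (∑ j, d j) = (of fun i j => (M i j).coeff (d j)).det := by
  simp only [det_apply, finsetSum_coeff, coeff_smul, of_apply]
  refine Finset.sum_congr rfl fun σ _ => ?_
  rw [coeff_prod_sum_of_natDegree_le _ _ _ fun i _ => h (σ i) i]

theorem det_descFactorial_eq_det_vandermonde {R : Type*} [CommRing R] [IsDomain R] {m : ℕ}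
    (v : Fin m → ℕ) :
    (of fun i j : Fin m => ((v j).descFactorial i : R)).det =
      (vandermonde fun j => (v j : R)).det := by
  rw [det_eval_matrixOfPolynomials_eq_det_vandermonde _ (fun i => descPochhammer R i)
    (fun i => descPochhammer_natDegree R i) (fun i => monic_descPochhammer R i), ← det_transpose]
  simp only [transpose, of_apply, descPochhammer_eval_eq_descFactorial]

end Matrix

theorem Nat.cast_injOn_Iic_of_factorial_ne_zero {R : Type*} [Ring R] {N : ℕ}
    (h : (N.factorial : R) ≠ 0) : Set.InjOn (Nat.cast : ℕ → R) (Set.Iic N) := by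
  suffices ∀ a b, b ≤ N → a ≤ b → (a : R) = b → a = b by
    intro a ha b hb hab
    rcases le_total a b with hle | hle
    exacts [this a b hb hle hab, (this b a ha hle hab.symm).symm]
  intro a b hb hle hab
  by_contra hne
  obtain ⟨c, hc⟩ := Nat.dvd_factorial (Nat.sub_pos_of_lt (lt_of_le_of_ne hle hne))
    ((Nat.sub_le b a).trans hb)
  apply h
  rw [hc, Nat.cast_mul, Nat.cast_sub hle, hab, sub_self, zero_mul]

namespace Polynomial

open Module

variable {k : Type*} [Field k]

theorem exists_mem_forall_natDegree_le (V : Submodule k k[X]) {m : ℕ}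
    (hV : finrank k V = m + 1) : ∃ p ∈ V, p ≠ 0 ∧ ∀ q ∈ V, q.natDegree ≤ p.natDegree := by
  have : FiniteDimensional k V := Module.finite_of_finrank_eq_succ hV
  let b := finBasisOfFinrankEq k V hV
  obtain ⟨j₀, hj₀⟩ := Finite.exists_max fun j => (b j : k[X]).natDegree
  refine ⟨b j₀, (b j₀).2, fun h => b.ne_zero j₀ (Subtype.ext h), fun q hq => ?_⟩
  have hq' : q = ((∑ j, b.repr ⟨q, hq⟩ j • b j : V) : k[X]) :=
    congrArg Subtype.val (b.sum_repr ⟨q, hq⟩).symm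
  rw [hq', Submodule.coe_sum]
  exact natDegree_sum_le_of_forall_le _ _ fun j _ => (natDegree_smul_le _ _).trans (hj₀ j)

theorem exists_natDegree_injective_of_finrank_eq :
    ∀ {m : ℕ} (V : Submodule k k[X]), finrank k V = m →
      ∃ g : Fin m → k[X], (∀ j, g j ∈ V) ∧ (∀ j, g j ≠ 0) ∧
        Function.Injective fun j => (g j).natDegree := by
  intro m
  induction m with
  | zero =>
    exact fun _ _ => ⟨fun j => j.elim0, fun j => j.elim0, fun j => j.elim0, fun j => j.elim0⟩
  | succ m ih =>
    intro V hV
    have : FiniteDimensional k V := Module.finite_of_finrank_eq_succ hV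
    obtain ⟨p, hpV, hp0, hmax⟩ := exists_mem_forall_natDegree_le V hV
    let φ : Dual k V := (lcoeff k p.natDegree).domRestrict V
    have hφ : φ ≠ 0 := fun h => hp0 (leadingCoeff_eq_zero.mp (LinearMap.congr_fun h ⟨p, hpV⟩))
    have hW : finrank k ((LinearMap.ker φ).map V.subtype) = m := by
      have := φ.finrank_ker_add_one_of_ne_zero hφ
      rw [Submodule.finrank_map_subtype_eq]
      omega
    obtain ⟨g, hgW, hg0, hginj⟩ := ih _ hW
    have hgV : ∀ j, g j ∈ V ∧ (g j).natDegree < p.natDegree := by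
      intro j
      obtain ⟨q, hq, hqg⟩ := Submodule.mem_map.mp (hgW j)
      rw [← hqg]
      refine ⟨q.2, lt_of_le_of_ne (hmax _ q.2) fun h => hg0 j ?_⟩
      rw [← hqg, ← leadingCoeff_eq_zero, leadingCoeff, h]
      exact hq
    refine ⟨Fin.cons p g, Fin.forall_fin_succ.mpr ⟨hpV, fun j => (hgV j).1⟩,
      Fin.forall_fin_succ.mpr ⟨hp0, hg0⟩, ?_⟩
    change Function.Injective (natDegree ∘ Fin.cons p g)
    rw [Fin.comp_cons, Fin.cons_injective_iff]
    exact ⟨fun ⟨j, hj⟩ => (hgV j).2.ne hj, hginj⟩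

end Polynomial

open Matrix in
theorem Wr_ne_zero_of_injective_natDegree {k : Type*} [Field k] {m : ℕ} (g : Fin m → k[X])
    (hg : ∀ j, g j ≠ 0) (hdeg : Function.Injective fun j => ((g j).natDegree : k)) :
    Wr g ≠ 0 := by
  set d := fun j => (g j).natDegree
  set M : Matrix (Fin m) (Fin m) k[X] := of fun i j => X ^ (i : ℕ) * derivative^[i] (g j)
  have hM : M.det = (∏ i : Fin m, X ^ (i : ℕ)) * Wr g := det_mul_column _ _
  have htop : M.det.coeff (∑ j, d j) =
      (∏ j, (g j).leadingCoeff) * (vandermonde fun j => (d j : k)).det := by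
    rw [coeff_det_sum_of_natDegree_le M d fun i j => natDegree_X_pow_mul_iterate_derivative_le _ _]
    simp only [M, of_apply, coeff_X_pow_mul_iterate_derivative, nsmul_eq_mul,
      mul_comm _ (coeff _ _)]
    rw [← det_descFactorial_eq_det_vandermonde]
    exact det_mul_row (fun j => (g j).leadingCoeff)
      (of fun i j : Fin m => ((d j).descFactorial i : k))
  intro hW
  rw [hM, hW, mul_zero, coeff_zero] at htop
  exact mul_ne_zero (Finset.prod_ne_zero_iff.mpr fun j _ => leadingCoeff_ne_zero.mpr (hg j))
    (det_vandermonde_ne_zero_iff.mpr hdeg) htop.symm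

theorem Wr_sum_smul {k : Type*} [Field k] {m : ℕ} (f : Fin m → k[X])
    (A : Matrix (Fin m) (Fin m) k) :
    Wr (fun j => ∑ l, A l j • f l) = Wr f * C A.det := by
  have hmat : (Matrix.of fun i j : Fin m => derivative^[i] (∑ l, A l j • f l)) =
      (Matrix.of fun i j : Fin m => derivative^[i] (f j)) * A.map C := by
    refine Matrix.ext fun i j => ?_
    simp only [Matrix.of_apply, Matrix.mul_apply, Matrix.map_apply, iterate_derivative_sum,
      smul_eq_C_mul, iterate_derivative_C_mul]
    exact Finset.sum_congr rfl fun l _ => mul_comm _ _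
  rw [Wr, Wr, hmat, Matrix.det_mul, ← C.mapMatrix_apply, ← RingHom.map_det]

theorem Wr_ne_zero_of_forall_mem_span {k : Type*} [Field k] {m : ℕ} {f g : Fin m → k[X]}
    (hg : ∀ j, g j ∈ Submodule.span k (Set.range f)) (hWg : Wr g ≠ 0) : Wr f ≠ 0 := by
  choose A hA using fun j => (Submodule.mem_span_range_iff_exists_fun k).mp (hg j)
  have hgA : g = fun j => ∑ l, (Matrix.of fun l j => A j l) l j • f l :=
    funext fun j => (hA j).symm
  rw [hgA, Wr_sum_smul] at hWg
  exact left_ne_zero_of_mul hWg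

theorem wronskian_ne_zero_of_linearIndependent_general {k : Type*} [Field k] (n : ℕ)
    (hfac : ((Nat.factorial (n - 1) : k) ≠ 0)) {m : ℕ}
    (f : Fin m → Polynomial k) (hf : ∀ i, (f i).degree < n)
    (hli : LinearIndependent k f) :
    Wr f ≠ 0 := by
  obtain ⟨g, hgf, hg0, hginj⟩ := exists_natDegree_injective_of_finrank_eq _
    ((finrank_span_eq_card hli).trans (Fintype.card_fin m))
  have hgn : ∀ j, (g j).natDegree ≤ n - 1 := by
    intro j
    have hmem : g j ∈ degreeLT k n :=
      Submodule.span_le.mpr (Set.range_subset_iff.mpr fun i => mem_degreeLT.mpr (hf i)) (hgf j)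
    have := (natDegree_lt_iff_degree_lt (hg0 j)).mpr (mem_degreeLT.mp hmem)
    omega
  refine Wr_ne_zero_of_forall_mem_span hgf
    (Wr_ne_zero_of_injective_natDegree g hg0 fun i j hij => hginj ?_)
  exact Nat.cast_injOn_Iic_of_factorial_ne_zero hfac (hgn i) (hgn j) hij

theorem wronskian_ne_zero_of_linearIndependent {k : Type*} [Field k] (n : ℕ) (hn : 1 ≤ n)
    (hfac : ((Nat.factorial (n - 1) : k) ≠ 0)) {m : ℕ}
    (f : Fin m → Polynomial k) (hf : ∀ i, (f i).degree < n)
    (hli : LinearIndependent k f) :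
    Wr f ≠ 0 :=
  wronskian_ne_zero_of_linearIndependent_general n hfac f hf hli
end

section
/- Let k be a field and let f : Fin m → Polynomial k with natDegree (f i) ≤ m + p − 1 for every i. Then the Wronskian satisfies natDegree (Wr f) ≤ m * p. -/
open Polynomial

/-!
The Wronskian is `k`-multilinear in `f`, so expanding every `f j` in the monomials `X ^ e` with
`e < m + p` reduces the bound to families `f j = X ^ d j`. Such a Wronskian vanishes unless `d` is
injective, and each term of its Leibniz expansion has degree at most `∑ j, d j - ∑ i < m, i`;
for `m` distinct exponents below `m + p` this is at most `m * p`.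
-/

open Finset

theorem Finset.sum_le_card_mul_add_sum_range {p : ℕ} (s : Finset ℕ) (hs : s ⊆ range (#s + p)) :
    ∑ x ∈ s, x ≤ #s * p + ∑ i ∈ range #s, i := by
  induction s using Finset.induction_on_max with
  | empty => simp
  | insert a s has ih =>
    have ha : a ∉ s := fun h => lt_irrefl a (has a h)
    rw [card_insert_of_notMem ha] at hs ⊢
    rw [sum_insert ha, sum_range_succ, add_mul, one_mul]
    have ha' : a < #s + 1 + p := mem_range.1 (hs (mem_insert_self a s))
    have := ih fun x hx => mem_range.2 (by have := has x hx; omega)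
    omega

section Wronskian

variable {k : Type*} [Field k] {m : ℕ}

theorem wronskian_eq_zero_of_apply_eq (f : Fin m → k[X]) {a b : Fin m} (hab : a ≠ b)
    (h : f a = f b) : Wr f = 0 :=
  Matrix.det_zero_of_column_eq hab fun i => by simp [h]

theorem natDegree_wronskian_X_pow_le (d : Fin m → ℕ) :
    (Wr fun j => (X : k[X]) ^ d j).natDegree ≤ ∑ j, d j - ∑ i ∈ range m, i := by
  rw [Wr, Matrix.det_apply']
  refine natDegree_sum_le_of_forall_le _ _ fun σ _ => ?_
  refine natDegree_mul_le.trans ?_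
  rw [natDegree_intCast, zero_add]
  by_cases hσ : ∀ i, (σ i : ℕ) ≤ d i
  · calc (∏ i, derivative^[σ i] ((X : k[X]) ^ d i)).natDegree
        ≤ ∑ i, (derivative^[σ i] ((X : k[X]) ^ d i)).natDegree := natDegree_prod_le _ _
      _ ≤ ∑ i, (d i - σ i) :=
        sum_le_sum fun i _ => (natDegree_iterate_derivative _ _).trans (by simp)
      _ = ∑ j, d j - ∑ i ∈ range m, i := by
        have hσsum : ∑ i, (σ i : ℕ) = ∑ i ∈ range m, i := by
          rw [Equiv.sum_comp σ (fun i : Fin m => (i : ℕ)), Fin.sum_univ_eq_sum_range (fun i => i) m]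
        rw [← hσsum, eq_tsub_iff_add_eq_of_le (sum_le_sum fun i _ => hσ i),
          ← sum_add_distrib]
        exact sum_congr rfl fun i _ => Nat.sub_add_cancel (hσ i)
  · push Not at hσ
    obtain ⟨i, hi⟩ := hσ
    rw [prod_eq_zero (mem_univ i) (iterate_derivative_eq_zero (by simpa using hi)), natDegree_zero]
    exact Nat.zero_le _

theorem natDegree_wronskian_X_pow_le_mul {p : ℕ} (d : Fin m → ℕ) (hd : ∀ j, d j < m + p) :
    (Wr fun j => (X : k[X]) ^ d j).natDegree ≤ m * p := by
  by_cases hinj : Function.Injective d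
  · have hcard : #(univ.image d) = m := by simp [card_image_of_injective _ hinj]
    have hsum := (univ.image d).sum_le_card_mul_add_sum_range (p := p) <| by
      rw [hcard]; intro x hx; obtain ⟨j, -, rfl⟩ := mem_image.1 hx; exact mem_range.2 (hd j)
    rw [hcard, sum_image hinj.injOn] at hsum
    exact (natDegree_wronskian_X_pow_le d).trans (by omega)
  · obtain ⟨a, b, hab, hne⟩ : ∃ a b, d a = d b ∧ a ≠ b := by
      simpa [Function.Injective] using hinj
    rw [wronskian_eq_zero_of_apply_eq _ hne (by simp only [hab]), natDegree_zero]
    exact Nat.zero_le _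

variable (k m) in
noncomputable def wronskianMultilinearMap : MultilinearMap k (fun _ : Fin m => k[X]) k[X] :=
  ((Matrix.detRowAlternating (n := Fin m) (R := k[X])).toMultilinearMap.restrictScalars k)
    |>.compLinearMap fun _ => LinearMap.pi fun i : Fin m => derivative ^ (i : ℕ)

theorem wronskianMultilinearMap_apply (f : Fin m → k[X]) :
    wronskianMultilinearMap k m f = Wr f := by
  rw [Wr, ← Matrix.det_transpose]
  refine congrArg Matrix.det (Matrix.ext fun i j => ?_)
  simp [Module.End.pow_apply]

end Wronskian

theorem natDegree_wronskian_le {k : Type*} [Field k] {m p : ℕ}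
    (f : Fin m → Polynomial k) (hf : ∀ i, (f i).natDegree ≤ m + p - 1) :
    (Wr f).natDegree ≤ m * p := by
  have hexpand : f = fun j => ∑ e ∈ range (m + p), (f j).coeff e • (X : k[X]) ^ e := by
    funext j
    simp_rw [smul_X_eq_monomial]
    exact (f j).as_sum_range' (m + p) (by have := hf j; have := j.pos; omega)
  rw [← wronskianMultilinearMap_apply, hexpand, MultilinearMap.map_sum_finset]
  refine natDegree_sum_le_of_forall_le _ _ fun d hd => ?_
  rw [MultilinearMap.map_smul_univ, wronskianMultilinearMap_apply]
  exact (natDegree_smul_le _ _).trans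
    (natDegree_wronskian_X_pow_le_mul d fun j => mem_range.1 (Fintype.mem_piFinset.1 hd j))
end

section
/- Let k be a field, m ≥ 1, and let a : Fin m → ℕ be strictly increasing. Then the Wronskian of the monomials X^(a i) satisfies Wr(fun i => X^(a i)) = (∏_{i < j} (a j − a i) : ℕ) • X^((∑_i a i) − m(m−1)/2), where the product of the differences a j − a i over pairs i < j is a natural number cast into k. -/
open Polynomial

theorem wronskian_monomials {k : Type*} [Field k] (m : ℕ) (hm : 1 ≤ m)
    (a : Fin m → ℕ) (ha : StrictMono a) :
    Wr (fun i => (Polynomial.X : Polynomial k) ^ a i) =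
      (∏ q ∈ Finset.univ.filter (fun q : Fin m × Fin m => q.1 < q.2), (a q.2 - a q.1)) •
        (Polynomial.X : Polynomial k) ^ ((∑ i, a i) - m * (m - 1) / 2) := by
  classical
  -- `i ≤ a i` for all `i`
  have hle : ∀ i : Fin m, (i : ℕ) ≤ a i := by
    suffices h : ∀ n, ∀ hn : n < m, n ≤ a ⟨n, hn⟩ by
      intro i; simpa using h i.val i.isLt
    intro n
    induction n with
    | zero => intro _; exact Nat.zero_le _
    | succ n ih =>
        intro h
        have hn : n < m := by omega
        have h1 : a ⟨n, hn⟩ < a ⟨n + 1, h⟩ := ha (by simp [Fin.lt_def])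
        have h2 := ih hn
        omega
  set T : ℕ := m * (m - 1) / 2 with hT
  set S : ℕ := ∑ i, a i with hS
  have hTsum : (∑ i : Fin m, (i : ℕ)) = T := by
    rw [hT, ← Finset.sum_range_id m, Finset.sum_range fun i => i]
  have hTS : T ≤ S := by
    rw [← hTsum, hS]
    exact Finset.sum_le_sum fun i _ => hle i
  -- the natural number constant
  set N : ℕ := ∏ q ∈ Finset.univ.filter (fun q : Fin m × Fin m => q.1 < q.2), (a q.2 - a q.1)
    with hN
  -- determinant of the descFactorial matrix over ℤ
  have hdetZ :
      Matrix.det (Matrix.of fun i j : Fin m => ((a j).descFactorial (i : ℕ) : ℤ)) = (N : ℤ) := by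
    have hvand :
        Matrix.det (Matrix.vandermonde fun i : Fin m => (a i : ℤ)) =
          Matrix.det (Matrix.of fun i j : Fin m =>
            ((descPochhammer ℤ (j : ℕ)).eval ((a i : ℤ)))) :=
      Matrix.det_eval_matrixOfPolynomials_eq_det_vandermonde _ _
        (fun i => descPochhammer_natDegree ℤ i) (fun i => monic_descPochhammer ℤ i)
    have htrans :
        Matrix.det (Matrix.of fun i j : Fin m => ((a j).descFactorial (i : ℕ) : ℤ)) =
          Matrix.det (Matrix.of fun i j : Fin m =>
            ((descPochhammer ℤ (j : ℕ)).eval ((a i : ℤ)))) := by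
      rw [← Matrix.det_transpose]
      congr 1
      ext i j
      simp [Matrix.transpose, descPochhammer_eval_eq_descFactorial]
    rw [htrans, ← hvand, Matrix.det_vandermonde]
    have : ∀ i j : Fin m, i < j → ((a j : ℤ) - (a i : ℤ)) = ((a j - a i : ℕ) : ℤ) := by
      intro i j hij
      have := (ha hij).le
      push_cast [this]
      ring
    rw [hN, Nat.cast_prod, Finset.prod_filter, Fintype.prod_prod_type]
    refine Finset.prod_congr rfl fun i _ => ?_
    rw [← Finset.prod_filter]
    have hfil : Finset.filter (fun j : Fin m => i < j) Finset.univ = Finset.Ioi i := by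
      ext j; simp
    rw [hfil]
    exact Finset.prod_congr rfl fun j hj =>
      (Nat.cast_sub (ha (Finset.mem_Ioi.mp hj)).le).symm
  -- the Wronskian matrix
  set W : Matrix (Fin m) (Fin m) (Polynomial k) :=
    Matrix.of fun i j : Fin m => Polynomial.derivative^[(i : ℕ)] ((X : Polynomial k) ^ a j)
    with hW
  -- multiply row i by X^i
  have key : (X : Polynomial k) ^ T * Matrix.det W =
      (N : Polynomial k) * X ^ S := by
    have hrow : Matrix.det (Matrix.of fun i j : Fin m => (X : Polynomial k) ^ (i : ℕ) * W i j)
        = (∏ i : Fin m, (X : Polynomial k) ^ (i : ℕ)) * Matrix.det W :=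
      Matrix.det_mul_column _ _
    have hprod : (∏ i : Fin m, (X : Polynomial k) ^ (i : ℕ)) = (X : Polynomial k) ^ T := by
      rw [← hTsum, Finset.prod_pow_eq_pow_sum]
    have hentry : ∀ i j : Fin m, (X : Polynomial k) ^ (i : ℕ) * W i j =
        ((a j).descFactorial (i : ℕ) : Polynomial k) * X ^ a j := by
      intro i j
      rw [hW]
      simp only [Matrix.of_apply]
      rw [Polynomial.iterate_derivative_X_pow_eq_natCast_mul]
      by_cases h : (i : ℕ) ≤ a j
      · rw [mul_comm ((X : Polynomial k) ^ (i : ℕ)), mul_assoc, ← pow_add]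
        congr 2
        omega
      · rw [Nat.descFactorial_eq_zero_iff_lt.mpr (by omega)]
        simp
    calc (X : Polynomial k) ^ T * Matrix.det W
        = Matrix.det (Matrix.of fun i j : Fin m => (X : Polynomial k) ^ (i : ℕ) * W i j) := by
          rw [hrow, hprod]
      _ = Matrix.det (Matrix.of fun i j : Fin m =>
            (X : Polynomial k) ^ a j * ((a j).descFactorial (i : ℕ) : Polynomial k)) := by
          congr 1; ext i j
          simp only [Matrix.of_apply]
          rw [hentry i j, mul_comm]
      _ = (∏ j : Fin m, (X : Polynomial k) ^ a j) *
            Matrix.det (Matrix.of fun i j : Fin m =>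
              ((a j).descFactorial (i : ℕ) : Polynomial k)) := Matrix.det_mul_row _ _
      _ = (N : Polynomial k) * X ^ S := by
          rw [Finset.prod_pow_eq_pow_sum, ← hS]
          have : Matrix.det (Matrix.of fun i j : Fin m =>
              ((a j).descFactorial (i : ℕ) : Polynomial k)) = (N : Polynomial k) := by
            have h := congrArg (Int.castRingHom (Polynomial k)) hdetZ
            rw [RingHom.map_det] at h
            have hmap : ((Matrix.of fun i j : Fin m => ((a j).descFactorial (i : ℕ) : ℤ)).map
                (Int.castRingHom (Polynomial k))) =
                Matrix.of fun i j : Fin m => ((a j).descFactorial (i : ℕ) : Polynomial k) := by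
              ext i j; simp
            rw [RingHom.mapMatrix_apply, hmap] at h
            simpa using h
          rw [this, mul_comm]
  -- cancel X^T
  have hX : ((X : Polynomial k) ^ T) ≠ 0 := pow_ne_zero _ X_ne_zero
  have : (X : Polynomial k) ^ T * Matrix.det W =
      (X : Polynomial k) ^ T * (N • (X : Polynomial k) ^ (S - T)) := by
    rw [key, nsmul_eq_mul]
    rw [mul_comm ((X : Polynomial k) ^ T), mul_assoc, ← pow_add]
    congr 2
    omega
  have := mul_left_cancel₀ hX this
  simpa [Wr, hW] using this
end

section
/- Let k be a field and m, p ≥ 0. Then the Wronskian of the consecutive monomials X^p, X^(p+1), …, X^(p+m−1) is Wr(fun γ : Fin m => X^(p+γ)) = ((∏_{r=1}^{m−1} r!) : ℕ) • X^(m*p), where the product of factorials is cast from ℕ into k. -/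
open Polynomial

/-!
Multiplying row `i` of the Wronskian matrix of `X ^ (p + j)` by `X ^ i` turns its entries into
`(p + j).descFactorial i * X ^ (p + j)`. Pulling `X ^ (p + j)` out of column `j` leaves the matrix
of values of the descending Pochhammer polynomials at `p, p + 1, …, p + m - 1`, whose determinant
is the Vandermonde determinant of these points, i.e. the superfactorial of `m - 1`.
-/

open Matrix

theorem X_pow_mul_iterate_derivative_X_pow {R : Type*} [CommSemiring R] (i n : ℕ) :
    X ^ i * derivative^[i] (X ^ n : R[X]) = C (n.descFactorial i : R) * X ^ n := by
  rw [iterate_derivative_X_pow_eq_C_mul, mul_left_comm]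
  rcases le_or_gt i n with h | h
  · rw [← pow_add, Nat.add_sub_cancel' h]
  · simp [Nat.descFactorial_eq_zero_iff_lt.mpr h]

theorem X_pow_sum_mul_Wr {k : Type*} [Field k] {m : ℕ} (f : Fin m → k[X]) :
    X ^ (∑ i : Fin m, (i : ℕ)) * Wr f =
      det (of fun i j : Fin m => X ^ (i : ℕ) * derivative^[i] (f j)) := by
  rw [← Finset.prod_pow_eq_pow_sum, Wr, ← det_mul_column]
  rfl

theorem det_descFactorial_add {R : Type*} [CommRing R] [IsDomain R] (m p : ℕ) :
    det (of fun i j : Fin m => ((p + j).descFactorial i : R)) = (m - 1).superFactorial := by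
  rcases m with _ | n
  · simp
  have h_eval : (of fun i j : Fin (n + 1) => ((p + j).descFactorial i : R)) =
      (of fun i j : Fin (n + 1) => (descPochhammer R j).eval ((i : R) + p))ᵀ := by
    ext i j
    simp [← descPochhammer_eval_eq_descFactorial, add_comm]
  rw [h_eval, det_transpose, ← det_eval_matrixOfPolynomials_eq_det_vandermonde _ _
    (fun i => descPochhammer_natDegree R i) (fun i => monic_descPochhammer R i),
    det_vandermonde_add, det_vandermonde_id_eq_superFactorial, add_tsub_cancel_right]

theorem wronskian_consecutive_monomials {k : Type*} [Field k] (m p : ℕ) :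
    Wr (fun γ : Fin m => (Polynomial.X : Polynomial k) ^ (p + (γ : ℕ))) =
      (∏ r ∈ Finset.Icc 1 (m - 1), Nat.factorial r) •
        (Polynomial.X : Polynomial k) ^ (m * p) := by
  apply mul_left_cancel₀ (pow_ne_zero (∑ i : Fin m, (i : ℕ)) (X_ne_zero (R := k)))
  have h_cols : ∏ j : Fin m, (X : k[X]) ^ (p + j) = X ^ (m * p) * X ^ (∑ i : Fin m, (i : ℕ)) := by
    rw [Finset.prod_pow_eq_pow_sum, Finset.sum_add_distrib, pow_add]
    simp
  have h_rows : (of fun i j : Fin m => X ^ (i : ℕ) * derivative^[i] ((X : k[X]) ^ (p + j))) =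
      of fun i j : Fin m => X ^ (p + (j : ℕ)) * C ((p + j).descFactorial i : k) := by
    ext i j
    rw [of_apply, of_apply, X_pow_mul_iterate_derivative_X_pow, mul_comm]
  have h_const : (fun i j : Fin m => C ((p + j).descFactorial i : k) : Matrix _ _ k[X]) =
      (C : k →+* k[X]).mapMatrix (of fun i j : Fin m => ((p + j).descFactorial i : k)) := rfl
  rw [X_pow_sum_mul_Wr, h_rows, det_mul_row _ fun i j : Fin m => C _, h_cols, h_const,
    ← RingHom.map_det, det_descFactorial_add, Nat.prod_Icc_factorial, nsmul_eq_mul, map_natCast]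
  ring
end

section
/- Let k be a field, m, p ≥ 1, let u : Fin p → Polynomial k and v : Fin m → Polynomial k, and let s ∈ k. In the multivariate polynomial ring MvPolynomial (Fin m × Fin p) k, let F be the determinant of the m × m matrix whose (j, γ) entry (row j, column γ, 0-indexed) is C (eval s (derivative^[j] (v γ))) + ∑_{κ ∈ Fin p} C (eval s (derivative^[j] (u κ))) * X (γ, κ). Then for every (γ, κ) ∈ Fin m × Fin p, the coefficient in F of the degree-one monomial X (γ, κ) equals eval s (Wr (Function.update v γ (u κ))), the Wronskian of the family v with its γ-th member replaced by u κ, evaluated at s. -/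
/-!
Send `X (γ, κ)` to `T` and every other variable to `0`. This algebra map into `k[T]` carries the
coefficient of the monomial `X (γ, κ)` to the coefficient of `T`, and it turns the matrix into one
whose only non-constant column is column `γ`, namely `a + T • b`. Linearity of the determinant in
that column gives `det A + T * det (A with column γ replaced by b)`, and the last determinant is the
Wronskian of `Function.update v γ (u κ)` evaluated at `s`.
-/

open Polynomial

theorem MvPolynomial.coeff_single_one_eq_coeff_aeval {σ R : Type*} [CommSemiring R]
    [DecidableEq σ] (x : σ) (p : MvPolynomial σ R) :
    p.coeff (Finsupp.single x 1) = (aeval (Pi.single x (Polynomial.X : R[X])) p).coeff 1 := by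
  induction p using MvPolynomial.induction_on' with
  | monomial n a =>
    rw [aeval_monomial, Polynomial.algebraMap_apply, Algebra.algebraMap_self, RingHom.id_apply,
      Polynomial.coeff_C_mul, coeff_monomial]
    by_cases hn : ∃ y ≠ x, n y ≠ 0
    · obtain ⟨y, hyx, hy⟩ := hn
      have hne : n ≠ Finsupp.single x 1 := fun h => hy (by simp [h, hyx])
      rw [if_neg hne, Finsupp.prod, Finset.prod_eq_zero (Finsupp.mem_support_iff.2 hy)
        (by simp [hyx, zero_pow hy])]
      simp
    · push Not at hn
      have hn : n = Finsupp.single x (n x) := by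
        ext y
        by_cases hyx : y = x
        · simp [hyx]
        · simp [hn y hyx, Ne.symm hyx]
      rw [hn, Finsupp.prod_single_index (by simp), Pi.single_eq_same, Polynomial.coeff_X_pow]
      simp [(Finsupp.single_injective x).eq_iff, eq_comm]
  | add p q hp hq => simp [hp, hq]

theorem Matrix.det_updateCol_C_add_X_mul {n R : Type*} [Fintype n] [DecidableEq n] [CommRing R]
    (A : Matrix n n R) (γ : n) (b : n → R) :
    ((A.map C).updateCol γ (fun j => C (A j γ) + X * C (b j))).det =
      C A.det + X * C (A.updateCol γ b).det := by
  have hcol : (fun j => C (A j γ) + X * C (b j) : n → R[X]) =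
      (fun j => A.map C j γ) + (X : R[X]) • (C ∘ b) := by
    ext j
    simp
  rw [hcol, det_updateCol_add, det_updateCol_smul, updateCol_eq_self, ← map_updateCol,
    RingHom.map_det, RingHom.map_det]
  rfl

theorem coeff_linear_term_of_det_general {k : Type*} [Field k] (m p : ℕ)
    (u : Fin p → Polynomial k) (v : Fin m → Polynomial k) (s : k) :
    ∀ γ : Fin m, ∀ κ : Fin p,
      MvPolynomial.coeff (Finsupp.single (γ, κ) 1)
        (Matrix.det (Matrix.of fun j γ' : Fin m =>
          (MvPolynomial.C (Polynomial.eval s (Polynomial.derivative^[(j : ℕ)] (v γ'))) +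
            ∑ κ' : Fin p,
              MvPolynomial.C (Polynomial.eval s (Polynomial.derivative^[(j : ℕ)] (u κ'))) *
                (MvPolynomial.X (γ', κ') : MvPolynomial (Fin m × Fin p) k)))) =
      Polynomial.eval s (Wr (Function.update v γ (u κ))) := by
  intro γ κ
  set A : Matrix (Fin m) (Fin m) k := .of fun j i => eval s (derivative^[j] (v i))
  set b : Fin m → k := fun j => eval s (derivative^[j] (u κ))
  have hwr : eval s (Wr (Function.update v γ (u κ))) = (A.updateCol γ b).det := by
    rw [Wr, ← coe_evalRingHom, RingHom.map_det]
    congr 1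
    ext j i
    rcases eq_or_ne i γ with rfl | hi <;> simp [A, b, *]
  rw [MvPolynomial.coeff_single_one_eq_coeff_aeval, AlgHom.map_det, hwr]
  convert congrArg (coeff · 1) (Matrix.det_updateCol_C_add_X_mul A γ b) using 3
  · ext j i
    rcases eq_or_ne i γ with rfl | hi <;> simp [A, b, Pi.single_apply, *]
  · simp

theorem coeff_linear_term_of_det {k : Type*} [Field k] (m p : ℕ)
    (hm : 1 ≤ m) (hp : 1 ≤ p)
    (u : Fin p → Polynomial k) (v : Fin m → Polynomial k) (s : k) :
    ∀ γ : Fin m, ∀ κ : Fin p,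
      MvPolynomial.coeff (Finsupp.single (γ, κ) 1)
        (Matrix.det (Matrix.of fun j γ' : Fin m =>
          (MvPolynomial.C (Polynomial.eval s (Polynomial.derivative^[(j : ℕ)] (v γ'))) +
            ∑ κ' : Fin p,
              MvPolynomial.C (Polynomial.eval s (Polynomial.derivative^[(j : ℕ)] (u κ'))) *
                (MvPolynomial.X (γ', κ') : MvPolynomial (Fin m × Fin p) k)))) =
      Polynomial.eval s (Wr (Function.update v γ (u κ))) :=
  coeff_linear_term_of_det_general m p u v s
end

section
/- Let k be a field, m, p ≥ 1, let V = (Fin (p+m) → k), and let P ≤ V be the span of the first p standard basis vectors. For X : Matrix (Fin m) (Fin p) k let U(X) ≤ V be the span of the m rows of the block matrix (X | 1_m), i.e. the rows i ↦ (X i 0, …, X i (p−1), 0, …, 1, …, 0) with the 1 in position p+i. Then the map X ↦ U(X) is injective, every U(X) satisfies finrank U(X) = m and U(X) ⊓ P = ⊥, and conversely every subspace U ≤ V with finrank U = m and U ⊓ P = ⊥ equals U(X) for a unique X : Matrix (Fin m) (Fin p) k. -/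
/-- The `i`-th row of the block matrix `(X | 1ₘ)`. -/
noncomputable def blockRow {k : Type*} [Field k] {m p : ℕ}
    (X : Matrix (Fin m) (Fin p) k) (i : Fin m) : Fin (p + m) → k :=
  Fin.addCases (fun j : Fin p => X i j) (fun a : Fin m => if a = i then 1 else 0)

/-- The row space `U(X)` of the block matrix `(X | 1ₘ)`. -/
noncomputable def rowSpaceU {k : Type*} [Field k] {m p : ℕ}
    (X : Matrix (Fin m) (Fin p) k) : Submodule k (Fin (p + m) → k) :=
  Submodule.span k (Set.range (blockRow X))

/-- The span `P` of the first `p` standard basis vectors of `Fin (p+m) → k`. -/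
noncomputable def firstCoords (k : Type*) [Field k] (m p : ℕ) : Submodule k (Fin (p + m) → k) :=
  Submodule.span k (Set.range fun j : Fin p => Pi.single (Fin.castAdd m j) (1 : k))

section aux

variable {k : Type*} [Field k] {m p : ℕ}

lemma blockRow_castAdd (X : Matrix (Fin m) (Fin p) k) (i : Fin m) (j : Fin p) :
    blockRow X i (Fin.castAdd m j) = X i j := by
  simp [blockRow]

lemma blockRow_natAdd (X : Matrix (Fin m) (Fin p) k) (i a : Fin m) :
    blockRow X i (Fin.natAdd p a) = if a = i then 1 else 0 := by
  simp [blockRow]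

lemma sum_smul_blockRow_natAdd (X : Matrix (Fin m) (Fin p) k) (c : Fin m → k) (a : Fin m) :
    (∑ i, c i • blockRow X i) (Fin.natAdd p a) = c a := by
  rw [Finset.sum_apply]
  simp only [Pi.smul_apply, blockRow_natAdd, smul_eq_mul, mul_ite, mul_one, mul_zero]
  simp

lemma mem_firstCoords_iff (v : Fin (p + m) → k) :
    v ∈ firstCoords k m p ↔ ∀ a : Fin m, v (Fin.natAdd p a) = 0 := by
  constructor
  · intro hv a
    have : firstCoords k m p ≤ LinearMap.ker (LinearMap.proj (R := k)
        (φ := fun _ : Fin (p + m) => k) (Fin.natAdd p a)) := by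
      rw [firstCoords, Submodule.span_le]
      rintro _ ⟨j, rfl⟩
      simp only [SetLike.mem_coe, LinearMap.mem_ker, LinearMap.proj_apply]
      apply Pi.single_eq_of_ne
      intro h
      have := congrArg Fin.val h
      simp only [Fin.coe_castAdd, Fin.coe_natAdd] at this
      omega
    exact this hv
  · intro hv
    have : v = ∑ j : Fin p, v (Fin.castAdd m j) • (Pi.single (Fin.castAdd m j) (1 : k) : Fin (p + m) → k) := by
      funext x
      rw [Finset.sum_apply]
      refine Fin.addCases (fun j' => ?_) (fun a => ?_) x
      · rw [Finset.sum_eq_single j']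
        · simp
        · intro b _ hb
          have hne : Fin.castAdd m j' ≠ Fin.castAdd m b := by
            intro h
            have hv := congrArg Fin.val h
            simp only [Fin.coe_castAdd] at hv
            exact hb (Fin.ext hv).symm
          simp only [Pi.smul_apply, smul_eq_mul]
          rw [Pi.single_eq_of_ne hne, mul_zero]
        · simp
      · rw [hv a, Finset.sum_eq_zero]
        intro b _
        simp only [Pi.smul_apply, smul_eq_mul]
        rw [Pi.single_eq_of_ne, mul_zero]
        intro h
        have := congrArg Fin.val h
        simp only [Fin.coe_castAdd, Fin.coe_natAdd] at this
        omega
    rw [this]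
    exact Submodule.sum_mem _ fun j _ => Submodule.smul_mem _ _
      (Submodule.subset_span ⟨j, rfl⟩)

lemma mem_rowSpaceU_iff (X : Matrix (Fin m) (Fin p) k) (v : Fin (p + m) → k) :
    v ∈ rowSpaceU X ↔ v = ∑ i, v (Fin.natAdd p i) • blockRow X i := by
  constructor
  · intro hv
    obtain ⟨c, hc⟩ := (Submodule.mem_span_range_iff_exists_fun k).mp hv
    have hca : ∀ a, c a = v (Fin.natAdd p a) := by
      intro a
      rw [← hc, sum_smul_blockRow_natAdd]
    rw [← hc]
    exact Finset.sum_congr rfl fun i _ => by rw [hca i, ← hc, sum_smul_blockRow_natAdd]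
  · intro hv
    rw [hv]
    exact Submodule.sum_mem _ fun i _ => Submodule.smul_mem _ _
      (Submodule.subset_span ⟨i, rfl⟩)

lemma blockRow_linearIndependent (X : Matrix (Fin m) (Fin p) k) :
    LinearIndependent k (blockRow X) := by
  rw [Fintype.linearIndependent_iff]
  intro c hc a
  have h := sum_smul_blockRow_natAdd X c a
  rw [hc] at h
  simpa using h.symm

end aux

theorem affine_chart_of_grassmannian {k : Type*} [Field k] (m p : ℕ)
    (hm : 1 ≤ m) (hp : 1 ≤ p) :
    Function.Injective (fun X : Matrix (Fin m) (Fin p) k => rowSpaceU X) ∧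
      (∀ X : Matrix (Fin m) (Fin p) k,
        Module.finrank k (rowSpaceU X) = m ∧ rowSpaceU X ⊓ firstCoords k m p = ⊥) ∧
      (∀ W : Submodule k (Fin (p + m) → k),
        Module.finrank k W = m → W ⊓ firstCoords k m p = ⊥ →
          ∃! X : Matrix (Fin m) (Fin p) k, rowSpaceU X = W) := by
  have hinj : Function.Injective (fun X : Matrix (Fin m) (Fin p) k => rowSpaceU X) := by
    intro X Y hXY
    simp only at hXY
    ext i j
    have hmem : blockRow X i ∈ rowSpaceU Y := by
      rw [← hXY]; exact Submodule.subset_span ⟨i, rfl⟩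
    rw [mem_rowSpaceU_iff] at hmem
    have : blockRow X i = blockRow Y i := by
      rw [hmem]
      rw [Finset.sum_eq_single i]
      · simp [blockRow_natAdd]
      · intro b _ hb
        rw [blockRow_natAdd, if_neg hb, zero_smul]
      · simp
    have := congrArg (fun f => f (Fin.castAdd m j)) this
    simpa [blockRow_castAdd] using this
  have hrank : ∀ X : Matrix (Fin m) (Fin p) k, Module.finrank k (rowSpaceU X) = m := by
    intro X
    rw [rowSpaceU, finrank_span_eq_card (blockRow_linearIndependent X), Fintype.card_fin]
  have hinf : ∀ X : Matrix (Fin m) (Fin p) k, rowSpaceU X ⊓ firstCoords k m p = ⊥ := by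
    intro X
    rw [eq_bot_iff]
    intro v hv
    rw [Submodule.mem_inf] at hv
    obtain ⟨hv1, hv2⟩ := hv
    rw [mem_rowSpaceU_iff] at hv1
    rw [mem_firstCoords_iff] at hv2
    rw [Submodule.mem_bot, hv1, Finset.sum_eq_zero]
    intro i _
    rw [hv2 i, zero_smul]
  refine ⟨hinj, fun X => ⟨hrank X, hinf X⟩, ?_⟩
  intro W hW hWP
  -- construct X
  set π : (Fin (p + m) → k) →ₗ[k] (Fin m → k) := LinearMap.funLeft k k (Fin.natAdd p) with hπ
  set φ : W →ₗ[k] (Fin m → k) := π.comp W.subtype with hφ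
  have hφinj : Function.Injective φ := by
    rw [← LinearMap.ker_eq_bot, eq_bot_iff]
    rintro ⟨w, hw⟩ hker
    simp only [LinearMap.mem_ker, hφ, LinearMap.comp_apply, Submodule.subtype_apply] at hker
    have hwP : w ∈ firstCoords k m p := by
      rw [mem_firstCoords_iff]
      intro a
      exact congrFun hker a
    have : w ∈ W ⊓ firstCoords k m p := ⟨hw, hwP⟩
    rw [hWP, Submodule.mem_bot] at this
    simpa [Submodule.mem_bot] using this
  have hdim : Module.finrank k W = Module.finrank k (Fin m → k) := by
    rw [hW, Module.finrank_fintype_fun_eq_card, Fintype.card_fin]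
  let e : W ≃ₗ[k] (Fin m → k) := LinearMap.linearEquivOfInjective φ hφinj hdim
  have he : ∀ w : W, e w = φ w := fun w => LinearMap.linearEquivOfInjective_apply _ _ w
  set σ : (Fin m → k) → W := fun v => e.symm v with hσ
  set X : Matrix (Fin m) (Fin p) k :=
    fun i j => (σ (Pi.single i 1) : Fin (p + m) → k) (Fin.castAdd m j) with hX
  have hrow : ∀ i, blockRow X i = (σ (Pi.single i 1) : Fin (p + m) → k) := by
    intro i
    funext x
    refine Fin.addCases (fun j => ?_) (fun a => ?_) x
    · rw [blockRow_castAdd]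
    · rw [blockRow_natAdd]
      have : e (σ (Pi.single i 1)) = Pi.single i 1 := e.apply_symm_apply _
      have h2 := congrFun ((he _).symm.trans this) a
      simp only [hφ, LinearMap.comp_apply, Submodule.subtype_apply, hπ,
        LinearMap.funLeft_apply] at h2
      rw [h2, Pi.single_apply]
  have hXW : rowSpaceU X = W := by
    have hle : rowSpaceU X ≤ W := by
      rw [rowSpaceU, Submodule.span_le]
      rintro _ ⟨i, rfl⟩
      rw [hrow i]
      exact (σ (Pi.single i 1)).2
    exact Submodule.eq_of_le_of_finrank_eq hle (by rw [hrank X, hW])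
  exact ⟨X, hXW, fun Y hY => hinj (hY.trans hXW.symm)⟩
end
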